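/- arXiv:2308.07351 — 5 statements merged into one kernel-verified Lean document; each statement's English description precedes it below -/
import Mathlib

section
/- In a discounted MDP with discount γ ∈ [0,1), suppose a policy π̃_g satisfies, at every state s, the one-step soft Bellman improvement inequality V_{π_tar}(s) ≤ E_{a∼π̃_g(·|s)}[r(s,a) − α log π̃_g(a|s) + γ E_{s'∼p(·|s,a)} V_{π_tar}(s')] + 2μ. Then V_{π̃_g}(s) ≥ V_{π_tar}(s) − 2μ/(1−γ) for all s. -/
/-!
Write `d = V_tar − V_g`. Subtracting the soft Bellman equation of `V_g` from the improvement
inequality, the reward and entropy terms cancel, leaving `d(s) ≤ γ · E[d(s')] + 2μ`, an average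
taken under a probability distribution. At a state where `d` is maximal this reads
`max d ≤ γ · max d + 2μ`, so `max d ≤ 2μ / (1 − γ)`.
-/

open Finset

theorem sum_mul_le_of_forall_le {ι : Type*} [Fintype ι] {w f : ι → ℝ} {M : ℝ}
    (hw : ∀ i, 0 ≤ w i) (hw1 : ∑ i, w i = 1) (hf : ∀ i, f i ≤ M) :
    ∑ i, w i * f i ≤ M :=
  calc ∑ i, w i * f i ≤ ∑ i, w i * M :=
        sum_le_sum fun i _ => mul_le_mul_of_nonneg_left (hf i) (hw i)
    _ = M := by rw [← sum_mul, hw1, one_mul]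

section

variable {S A : Type*} [Fintype S] [Fintype A]

noncomputable def softBellman (p : S → A → S → ℝ) (r : S → A → ℝ) (γ α : ℝ)
    (π : S → A → ℝ) (V : S → ℝ) (s : S) : ℝ :=
  ∑ a, π s a * (r s a - α * Real.log (π s a) + γ * ∑ s', p s a s' * V s')

theorem softBellman_sub_softBellman_le {p : S → A → S → ℝ} {r : S → A → ℝ} {γ α c : ℝ}
    {π : S → A → ℝ} {V W : S → ℝ} (hγ : 0 ≤ γ)
    (hp_nonneg : ∀ s a s', 0 ≤ p s a s') (hp_sum : ∀ s a, ∑ s', p s a s' = 1)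
    (hπ_nonneg : ∀ s a, 0 ≤ π s a) (hπ_sum : ∀ s, ∑ a, π s a = 1)
    (hVW : ∀ s, V s - W s ≤ c) (s : S) :
    softBellman p r γ α π V s - softBellman p r γ α π W s ≤ γ * c := by
  have hdiff : softBellman p r γ α π V s - softBellman p r γ α π W s =
      ∑ a, π s a * (γ * ∑ s', p s a s' * (V s' - W s')) := by
    simp only [softBellman, ← sum_sub_distrib, mul_sub]
    exact sum_congr rfl fun a _ => by rw [sum_sub_distrib]; ring
  rw [hdiff]
  refine sum_mul_le_of_forall_le (hπ_nonneg s) (hπ_sum s) fun a => ?_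
  exact mul_le_mul_of_nonneg_left
    (sum_mul_le_of_forall_le (hp_nonneg s a) (hp_sum s a) hVW) hγ

theorem sub_fixedPoint_le_div_of_le_add {T : (S → ℝ) → S → ℝ} {γ ε : ℝ} (hγ1 : γ < 1)
    (hT : ∀ V W c, (∀ s, V s - W s ≤ c) → ∀ s, T V s - T W s ≤ γ * c)
    {U V : S → ℝ} (hV : ∀ s, V s = T V s) (hU : ∀ s, U s ≤ T U s + ε) (s : S) :
    U s - V s ≤ ε / (1 - γ) := by
  obtain ⟨s₀, -, hmax⟩ := exists_max_image univ (fun t => U t - V t) ⟨s, mem_univ s⟩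
  have hbound : ∀ t, U t - V t ≤ U s₀ - V s₀ := fun t => hmax t (mem_univ t)
  have hcontract : U s₀ - V s₀ ≤ γ * (U s₀ - V s₀) + ε := by
    linarith [hU s₀, hV s₀, hT U V _ hbound s₀]
  calc U s - V s ≤ U s₀ - V s₀ := hbound s
    _ ≤ ε / (1 - γ) := by
      rw [le_div_iff₀ (by linarith)]
      linarith

end

theorem soft_bellman_improvement_value_bound_general
    {S A : Type*} [Fintype S] [Fintype A]
    (p : S → A → S → ℝ) (r : S → A → ℝ) (γ α μ : ℝ)
    (hγ : 0 ≤ γ) (hγ1 : γ < 1)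
    (hp_nonneg : ∀ s a s', 0 ≤ p s a s')
    (hp_sum : ∀ s a, ∑ s', p s a s' = 1)
    (πg : S → A → ℝ)
    (hπg_nonneg : ∀ s a, 0 ≤ πg s a)
    (hπg_sum : ∀ s, ∑ a, πg s a = 1)
    (Vtar Vg : S → ℝ)
    -- soft Bellman equation for V_{π̃_g}
    (hVg : ∀ s, Vg s =
      ∑ a, πg s a * (r s a - α * Real.log (πg s a) + γ * ∑ s', p s a s' * Vg s'))
    -- one-step soft Bellman improvement inequality for V_{π_tar}
    (himp : ∀ s, Vtar s ≤
      (∑ a, πg s a * (r s a - α * Real.log (πg s a) + γ * ∑ s', p s a s' * Vtar s'))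
        + 2 * μ) :
    ∀ s : S, Vg s ≥ Vtar s - 2 * μ / (1 - γ) := by
  intro s
  have hgap := sub_fixedPoint_le_div_of_le_add (T := softBellman p r γ α πg) hγ1
    (fun _ _ _ hVW => softBellman_sub_softBellman_le hγ hp_nonneg hp_sum hπg_nonneg hπg_sum hVW)
    hVg himp s
  linarith

/-- If π̃_g satisfies the one-step soft Bellman improvement inequality
with slack 2μ at every state, then V_{π̃_g}(s) ≥ V_{π_tar}(s) − 2μ/(1−γ) everywhere. -/
theorem soft_bellman_improvement_value_bound
    {S A : Type*} [Fintype S] [Fintype A]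
    (p : S → A → S → ℝ) (r : S → A → ℝ) (γ α μ : ℝ)
    (hγ : 0 ≤ γ) (hγ1 : γ < 1) (hα : 0 ≤ α) (hμ : 0 ≤ μ)
    (hp_nonneg : ∀ s a s', 0 ≤ p s a s')
    (hp_sum : ∀ s a, ∑ s', p s a s' = 1)
    (πg : S → A → ℝ)
    (hπg_nonneg : ∀ s a, 0 ≤ πg s a)
    (hπg_sum : ∀ s, ∑ a, πg s a = 1)
    (Vtar Vg : S → ℝ)
    -- soft Bellman equation for V_{π̃_g}
    (hVg : ∀ s, Vg s =
      ∑ a, πg s a * (r s a - α * Real.log (πg s a) + γ * ∑ s', p s a s' * Vg s'))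
    -- one-step soft Bellman improvement inequality for V_{π_tar}
    (himp : ∀ s, Vtar s ≤
      (∑ a, πg s a * (r s a - α * Real.log (πg s a) + γ * ∑ s', p s a s' * Vtar s'))
        + 2 * μ) :
    ∀ s : S, Vg s ≥ Vtar s - 2 * μ / (1 - γ) :=
  soft_bellman_improvement_value_bound_general p r γ α μ hγ hγ1 hp_nonneg hp_sum πg hπg_nonneg
    hπg_sum Vtar Vg hVg himp
end

section
/- Theorem 1: Let Q̃_{π_tar} approximate the soft Q-function of π_tar with |Q̃_{π_tar}(s,a) − Q_{π_tar}(s,a)| ≤ μ for all s,a. Define π̃_g(·|s) = argmax_{π(·|s)∈Π^s} E_{a∼π(·|s)}[Q̃_{π_tar}(s,a) − α log π(a|s)], where Π^s contains π_tar(·|s). Then V_{π̃_g}(s) ≥ V_{π_tar}(s) − 2μ/(1−γ) for all s ∈ S. -/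
/-!
Compare the two policies through `f = V_tar − V_g`. At each state, choosing `π̃_g` greedily for
`Q̃` instead of `Q_tar` costs at most `2μ` in the one-step soft objective for `Q_tar`: `μ` when
passing from `Q_tar` to `Q̃` at `π_tar`, `μ` when passing back at `π̃_g`. Expanding `V_g` by its
Bellman equation then gives `f ≤ 2μ + γ P f` for a stochastic kernel `P`, so the maximum `M`
of `f` satisfies `M ≤ 2μ + γ M`, i.e. `M ≤ 2μ / (1 − γ)`.
-/

open Finset Real

section WeightedSums

variable {ι : Type*} [Fintype ι] {w x : ι → ℝ} {M : ℝ}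

theorem sum_mul_le_of_le (hw : ∀ i, 0 ≤ w i) (hsum : ∑ i, w i = 1) (hx : ∀ i, x i ≤ M) :
    ∑ i, w i * x i ≤ M :=
  calc ∑ i, w i * x i ≤ ∑ i, w i * M :=
        sum_le_sum fun i _ => mul_le_mul_of_nonneg_left (hx i) (hw i)
    _ = M := by rw [← sum_mul, hsum, one_mul]

theorem abs_sum_mul_le_of_abs_le (hw : ∀ i, 0 ≤ w i) (hsum : ∑ i, w i = 1)
    (hx : ∀ i, |x i| ≤ M) : |∑ i, w i * x i| ≤ M :=
  calc |∑ i, w i * x i| ≤ ∑ i, |w i * x i| := abs_sum_le_sum_abs _ _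
    _ = ∑ i, w i * |x i| := sum_congr rfl fun i _ => by rw [abs_mul, abs_of_nonneg (hw i)]
    _ ≤ M := sum_mul_le_of_le hw hsum hx

end WeightedSums

noncomputable def softObjective {A : Type*} [Fintype A] (α : ℝ) (Q q : A → ℝ) : ℝ :=
  ∑ a, q a * (Q a - α * log (q a))

section SoftObjective

variable {A : Type*} [Fintype A] {α μ : ℝ}

theorem softObjective_sub_softObjective (Q Q' q : A → ℝ) :
    softObjective α Q q - softObjective α Q' q = ∑ a, q a * (Q a - Q' a) := by
  simp only [softObjective, ← sum_sub_distrib]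
  exact sum_congr rfl fun a _ => by ring

theorem abs_softObjective_sub_le {Q Q' q : A → ℝ} (hq : ∀ a, 0 ≤ q a) (hq_sum : ∑ a, q a = 1)
    (hQ : ∀ a, |Q a - Q' a| ≤ μ) : |softObjective α Q q - softObjective α Q' q| ≤ μ := by
  rw [softObjective_sub_softObjective]
  exact abs_sum_mul_le_of_abs_le hq hq_sum hQ

theorem softObjective_sub_le_of_approx_le {Q Q' q q' : A → ℝ}
    (hq : ∀ a, 0 ≤ q a) (hq_sum : ∑ a, q a = 1) (hq' : ∀ a, 0 ≤ q' a) (hq'_sum : ∑ a, q' a = 1)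
    (hQ : ∀ a, |Q' a - Q a| ≤ μ) (hmax : softObjective α Q' q ≤ softObjective α Q' q') :
    softObjective α Q q - 2 * μ ≤ softObjective α Q q' := by
  have hq_err := abs_le.1 (abs_softObjective_sub_le (α := α) hq hq_sum hQ)
  have hq'_err := abs_le.1 (abs_softObjective_sub_le (α := α) hq' hq'_sum hQ)
  linarith [hq_err.1, hq'_err.2]

theorem softObjective_sub_eq_of_softBellman {S : Type*} [Fintype S] {γ v : ℝ} {q r : A → ℝ}
    {P : A → S → ℝ} {V W : S → ℝ}
    (hv : v = ∑ a, q a * (r a - α * log (q a) + γ * ∑ s', P a s' * V s')) :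
    softObjective α (fun a => r a + γ * ∑ s', P a s' * W s') q - v =
      γ * ∑ a, q a * ∑ s', P a s' * (W s' - V s') := by
  rw [hv, softObjective, mul_sum, ← sum_sub_distrib]
  refine sum_congr rfl fun a _ => ?_
  simp only [mul_sub, sum_sub_distrib]
  ring

end SoftObjective

theorem le_div_one_sub_of_le_add_mul {S : Type*} [Fintype S] {f : S → ℝ} {c γ : ℝ} (hγ1 : γ < 1)
    (h : ∀ M, (∀ u, f u ≤ M) → ∀ t, f t ≤ c + γ * M) (s : S) : f s ≤ c / (1 - γ) := by
  obtain ⟨s₀, -, hs₀⟩ := exists_max_image univ f ⟨s, mem_univ s⟩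
  have hmax : ∀ u, f u ≤ f s₀ := fun u => hs₀ u (mem_univ u)
  have hs₀_le : f s₀ ≤ c / (1 - γ) := by
    rw [le_div_iff₀ (by linarith)]
    linarith [h (f s₀) hmax s₀]
  exact (hmax s).trans hs₀_le

theorem theorem_one_guidance_policy_value_bound_general
    {S A : Type*} [Fintype S] [Fintype A]
    (p : S → A → S → ℝ) (r : S → A → ℝ) (γ α μ : ℝ)
    (hγ : 0 ≤ γ) (hγ1 : γ < 1)
    (hp_nonneg : ∀ s a s', 0 ≤ p s a s')
    (hp_sum : ∀ s a, ∑ s', p s a s' = 1)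
    (πtar πg : S → A → ℝ)
    (hπtar_nonneg : ∀ s a, 0 ≤ πtar s a) (hπtar_sum : ∀ s, ∑ a, πtar s a = 1)
    (hπg_nonneg : ∀ s a, 0 ≤ πg s a) (hπg_sum : ∀ s, ∑ a, πg s a = 1)
    (Qtar Qapprox : S → A → ℝ) (Vtar Vg : S → ℝ)
    -- soft Bellman equations for π_tar
    (hQtar : ∀ s a, Qtar s a = r s a + γ * ∑ s', p s a s' * Vtar s')
    (hVtar : ∀ s, Vtar s = ∑ a, πtar s a * (Qtar s a - α * Real.log (πtar s a)))
    -- soft Bellman equation for the guidance policy's value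
    (hVg : ∀ s, Vg s =
      ∑ a, πg s a * (r s a - α * Real.log (πg s a) + γ * ∑ s', p s a s' * Vg s'))
    -- Q-approximation error bound
    (happrox : ∀ s a, |Qapprox s a - Qtar s a| ≤ μ)
    -- candidate sets containing the target policy's action distribution
    (Pis : S → Finset (A → ℝ))
    (hmem_tar : ∀ s, (fun a => πtar s a) ∈ Pis s)
    -- π̃_g(·|s) maximizes the expected approximate soft value over Π^s
    (hmax : ∀ s, ∀ q ∈ Pis s,
      (∑ a, q a * (Qapprox s a - α * Real.log (q a))) ≤
        (∑ a, πg s a * (Qapprox s a - α * Real.log (πg s a)))) :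
    ∀ s : S, Vg s ≥ Vtar s - 2 * μ / (1 - γ) := by
  have hgreedy : ∀ t, Vtar t - 2 * μ ≤ softObjective α (Qtar t) (πg t) := fun t => by
    rw [hVtar t]
    exact softObjective_sub_le_of_approx_le (hπtar_nonneg t) (hπtar_sum t) (hπg_nonneg t)
      (hπg_sum t) (happrox t) (hmax t _ (hmem_tar t))
  have hstep : ∀ M, (∀ u, Vtar u - Vg u ≤ M) → ∀ t, Vtar t - Vg t ≤ 2 * μ + γ * M := by
    intro M hM t
    have hbellman := softObjective_sub_eq_of_softBellman (W := Vtar) (hVg t)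
    rw [← funext (hQtar t)] at hbellman
    have hdiscounted : γ * ∑ a, πg t a * ∑ s', p t a s' * (Vtar s' - Vg s') ≤ γ * M :=
      mul_le_mul_of_nonneg_left (sum_mul_le_of_le (hπg_nonneg t) (hπg_sum t) fun a =>
        sum_mul_le_of_le (hp_nonneg t a) (hp_sum t a) hM) hγ
    linarith [hgreedy t]
  intro s
  linarith [le_div_one_sub_of_le_add_mul hγ1 hstep s]

/-- Theorem 1: With an approximate soft Q-function within μ of the
true one, the guidance policy chosen greedily from a candidate set containing
π_tar(·|s) satisfies V_{π̃_g}(s) ≥ V_{π_tar}(s) − 2μ/(1−γ) for all s. -/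
theorem theorem_one_guidance_policy_value_bound
    {S A : Type*} [Fintype S] [Fintype A]
    (p : S → A → S → ℝ) (r : S → A → ℝ) (γ α μ : ℝ)
    (hγ : 0 ≤ γ) (hγ1 : γ < 1) (hα : 0 ≤ α) (hμ : 0 ≤ μ)
    (hp_nonneg : ∀ s a s', 0 ≤ p s a s')
    (hp_sum : ∀ s a, ∑ s', p s a s' = 1)
    (πtar πg : S → A → ℝ)
    (hπtar_nonneg : ∀ s a, 0 ≤ πtar s a) (hπtar_sum : ∀ s, ∑ a, πtar s a = 1)
    (hπg_nonneg : ∀ s a, 0 ≤ πg s a) (hπg_sum : ∀ s, ∑ a, πg s a = 1)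
    (Qtar Qapprox : S → A → ℝ) (Vtar Vg : S → ℝ)
    -- soft Bellman equations for π_tar
    (hQtar : ∀ s a, Qtar s a = r s a + γ * ∑ s', p s a s' * Vtar s')
    (hVtar : ∀ s, Vtar s = ∑ a, πtar s a * (Qtar s a - α * Real.log (πtar s a)))
    -- soft Bellman equation for the guidance policy's value
    (hVg : ∀ s, Vg s =
      ∑ a, πg s a * (r s a - α * Real.log (πg s a) + γ * ∑ s', p s a s' * Vg s'))
    -- Q-approximation error bound
    (happrox : ∀ s a, |Qapprox s a - Qtar s a| ≤ μ)
    -- candidate sets containing the target policy's action distribution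
    (Pis : S → Finset (A → ℝ))
    (hdist : ∀ s, ∀ q ∈ Pis s, (∀ a, 0 ≤ q a) ∧ (∑ a, q a = 1))
    (hmem_tar : ∀ s, (fun a => πtar s a) ∈ Pis s)
    (hmem_g : ∀ s, (fun a => πg s a) ∈ Pis s)
    -- π̃_g(·|s) maximizes the expected approximate soft value over Π^s
    (hmax : ∀ s, ∀ q ∈ Pis s,
      (∑ a, q a * (Qapprox s a - α * Real.log (q a))) ≤
        (∑ a, πg s a * (Qapprox s a - α * Real.log (πg s a)))) :
    ∀ s : S, Vg s ≥ Vtar s - 2 * μ / (1 - γ) :=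
  theorem_one_guidance_policy_value_bound_general p r γ α μ hγ hγ1 hp_nonneg hp_sum πtar πg
    hπtar_nonneg hπtar_sum hπg_nonneg hπg_sum Qtar Qapprox Vtar Vg hQtar hVtar hVg happrox Pis
    hmem_tar hmax
end

section
/- Performance difference bound: for any two policies π and π' in a discounted MDP, V_π(s) − V_{π'}(s) ≤ (1/(1−γ)) max_{s'} [E_{a∼π(·|s')} Q_{π'}(s',a) − E_{a∼π'(·|s')} Q_{π'}(s',a)] + (α/(1−γ)) max_{s''} |H(π(·|s'')) − H(π'(·|s''))| for all s ∈ S, where H denotes Shannon entropy and Q_{π'} is the soft Q-function of π'. -/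
/-!
Let `M` be the largest gap `V t - V' t` over states. At every state the gap splits as
`E_π (Q - Q') + (E_π Q' - E_π' Q') + α (H π - H π')`. The Bellman equations make `Q - Q'`
equal to `γ` times a `p`-average of `V - V'`, hence at most `γ M`, while the last two terms are
bounded by the two maxima `D` and `α E` of the statement. So `M ≤ γ M + D + α E`, that is,
`M ≤ (D + α E) / (1 - γ)`.
-/

open Finset

section WeightedSum

variable {ι : Type*} [Fintype ι] {w : ι → ℝ}

theorem weighted_sum_le_of_le (hw : ∀ i, 0 ≤ w i) (hw1 : ∑ i, w i = 1) {f : ι → ℝ} {c : ℝ}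
    (hf : ∀ i, f i ≤ c) : ∑ i, w i * f i ≤ c :=
  calc ∑ i, w i * f i ≤ ∑ i, w i * c :=
        sum_le_sum fun i _ => mul_le_mul_of_nonneg_left (hf i) (hw i)
    _ = c := by rw [← sum_mul, hw1, one_mul]

theorem weighted_sum_sub_le (hw : ∀ i, 0 ≤ w i) (hw1 : ∑ i, w i = 1) {f g : ι → ℝ} {c : ℝ}
    (hfg : ∀ i, f i - g i ≤ c) : ∑ i, w i * f i - ∑ i, w i * g i ≤ c := by
  rw [← sum_sub_distrib]
  simpa only [mul_sub] using weighted_sum_le_of_le hw hw1 hfg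

end WeightedSum

theorem soft_expectation_sub_eq {A : Type*} [Fintype A] (μ ν q q' : A → ℝ) (α : ℝ) :
    ∑ a, μ a * (q a - α * Real.log (μ a)) - ∑ a, ν a * (q' a - α * Real.log (ν a)) =
      ∑ a, μ a * (q a - q' a) + (∑ a, μ a * q' a - ∑ a, ν a * q' a) +
        α * ((-∑ a, μ a * Real.log (μ a)) - (-∑ a, ν a * Real.log (ν a))) := by
  simp only [mul_sub, sum_sub_distrib, mul_left_comm _ α, ← mul_sum]
  ring

theorem le_div_one_sub_of_le_mul_sup'_add {S : Type*} [Fintype S] [Nonempty S] {f : S → ℝ}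
    {γ c : ℝ} (hγ1 : γ < 1) (hf : ∀ t, f t ≤ γ * univ.sup' univ_nonempty f + c) (s : S) :
    f s ≤ c / (1 - γ) := by
  have hM : univ.sup' univ_nonempty f ≤ γ * univ.sup' univ_nonempty f + c :=
    sup'_le _ _ fun t _ => hf t
  rw [le_div_iff₀ (by linarith)]
  nlinarith [le_sup' f (mem_univ s)]

theorem soft_performance_difference_bound_general
    {S A : Type*} [Fintype S] [Nonempty S] [Fintype A]
    (p : S → A → S → ℝ) (r : S → A → ℝ) (γ α : ℝ)
    (hγ : 0 ≤ γ) (hγ1 : γ < 1) (hα : 0 ≤ α)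
    (hp_nonneg : ∀ s a s', 0 ≤ p s a s')
    (hp_sum : ∀ s a, ∑ s', p s a s' = 1)
    (π π' : S → A → ℝ)
    (hπ_nonneg : ∀ s a, 0 ≤ π s a) (hπ_sum : ∀ s, ∑ a, π s a = 1)
    (Q Q' : S → A → ℝ) (V V' : S → ℝ)
    -- soft Bellman equations for π
    (hQ : ∀ s a, Q s a = r s a + γ * ∑ s', p s a s' * V s')
    (hV : ∀ s, V s = ∑ a, π s a * (Q s a - α * Real.log (π s a)))
    -- soft Bellman equations for π'
    (hQ' : ∀ s a, Q' s a = r s a + γ * ∑ s', p s a s' * V' s')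
    (hV' : ∀ s, V' s = ∑ a, π' s a * (Q' s a - α * Real.log (π' s a))) :
    ∀ s : S, V s - V' s ≤
      (1 / (1 - γ)) *
        (Finset.univ.sup' Finset.univ_nonempty (fun s' =>
          (∑ a, π s' a * Q' s' a) - (∑ a, π' s' a * Q' s' a)))
      + (α / (1 - γ)) *
        (Finset.univ.sup' Finset.univ_nonempty (fun s'' =>
          |(-∑ a, π s'' a * Real.log (π s'' a)) -
            (-∑ a, π' s'' a * Real.log (π' s'' a))|)) := by
  set D := univ.sup' univ_nonempty fun s' => ∑ a, π s' a * Q' s' a - ∑ a, π' s' a * Q' s' a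
  set E := univ.sup' univ_nonempty fun s'' =>
    |(-∑ a, π s'' a * Real.log (π s'' a)) - (-∑ a, π' s'' a * Real.log (π' s'' a))|
  set M := univ.sup' univ_nonempty fun t => V t - V' t
  have hQ_sub : ∀ t a, Q t a - Q' t a ≤ γ * M := fun t a => by
    rw [hQ, hQ', add_sub_add_left_eq_sub, ← mul_sub]
    exact mul_le_mul_of_nonneg_left
      (weighted_sum_sub_le (hp_nonneg t a) (hp_sum t a) fun s' =>
        le_sup' (fun t => V t - V' t) (mem_univ s')) hγ
  have hstep : ∀ t, V t - V' t ≤ γ * M + (D + α * E) := fun t => by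
    rw [hV, hV', soft_expectation_sub_eq]
    have hπQ := weighted_sum_le_of_le (hπ_nonneg t) (hπ_sum t) (hQ_sub t)
    have hD : ∑ a, π t a * Q' t a - ∑ a, π' t a * Q' t a ≤ D :=
      le_sup' (fun s' => ∑ a, π s' a * Q' s' a - ∑ a, π' s' a * Q' s' a) (mem_univ t)
    have hE : (-∑ a, π t a * Real.log (π t a)) - (-∑ a, π' t a * Real.log (π' t a)) ≤ E :=
      (le_abs_self _).trans (le_sup' (fun s'' => |(-∑ a, π s'' a * Real.log (π s'' a)) -
        (-∑ a, π' s'' a * Real.log (π' s'' a))|) (mem_univ t))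
    linarith [mul_le_mul_of_nonneg_left hE hα]
  intro s
  calc V s - V' s ≤ (D + α * E) / (1 - γ) := le_div_one_sub_of_le_mul_sup'_add hγ1 hstep s
    _ = 1 / (1 - γ) * D + α / (1 - γ) * E := by ring

/-- Performance difference bound for soft value functions:
V_π(s) − V_{π'}(s) ≤ (1/(1−γ)) max_{s'} [E_π Q_{π'} − E_{π'} Q_{π'}]
 + (α/(1−γ)) max_{s''} |H(π(·|s'')) − H(π'(·|s''))|. -/
theorem soft_performance_difference_bound
    {S A : Type*} [Fintype S] [Nonempty S] [Fintype A]
    (p : S → A → S → ℝ) (r : S → A → ℝ) (γ α : ℝ)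
    (hγ : 0 ≤ γ) (hγ1 : γ < 1) (hα : 0 ≤ α)
    (hp_nonneg : ∀ s a s', 0 ≤ p s a s')
    (hp_sum : ∀ s a, ∑ s', p s a s' = 1)
    (π π' : S → A → ℝ)
    (hπ_nonneg : ∀ s a, 0 ≤ π s a) (hπ_sum : ∀ s, ∑ a, π s a = 1)
    (hπ'_nonneg : ∀ s a, 0 ≤ π' s a) (hπ'_sum : ∀ s, ∑ a, π' s a = 1)
    (Q Q' : S → A → ℝ) (V V' : S → ℝ)
    -- soft Bellman equations for π
    (hQ : ∀ s a, Q s a = r s a + γ * ∑ s', p s a s' * V s')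
    (hV : ∀ s, V s = ∑ a, π s a * (Q s a - α * Real.log (π s a)))
    -- soft Bellman equations for π'
    (hQ' : ∀ s a, Q' s a = r s a + γ * ∑ s', p s a s' * V' s')
    (hV' : ∀ s, V' s = ∑ a, π' s a * (Q' s a - α * Real.log (π' s a))) :
    ∀ s : S, V s - V' s ≤
      (1 / (1 - γ)) *
        (Finset.univ.sup' Finset.univ_nonempty (fun s' =>
          (∑ a, π s' a * Q' s' a) - (∑ a, π' s' a * Q' s' a)))
      + (α / (1 - γ)) *
        (Finset.univ.sup' Finset.univ_nonempty (fun s'' =>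
          |(-∑ a, π s'' a * Real.log (π s'' a)) -
            (-∑ a, π' s'' a * Real.log (π' s'' a))|)) :=
  soft_performance_difference_bound_general p r γ α hγ hγ1 hα hp_nonneg hp_sum π π' hπ_nonneg hπ_sum
    Q Q' V V' hQ hV hQ' hV'
end

section
/- For two policies π and π' on a finite MDP, the difference of soft values decomposes via the normalized discounted state occupancy: V_π(s) − V_{π'}(s) = (1/(1−γ)) E_{s'∼ρ_s^π}[E_{a∼π(·|s')}[Q_{π'}(s',a) − α log π(a|s')] − E_{a∼π'(·|s')}[Q_{π'}(s',a) − α log π'(a|s')]], where ρ_s^π(s') = (1−γ) Σ_{t≥0} γ^t P(s_t = s' | s_0 = s, π). -/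
/-!
Writing `f = V - V'`, the soft Bellman equations give the one-step recursion
`f = Δ + γ P f`, where `Δ s = 𝔼_{a∼π(·|s)}[Q'(s,a) - α log π(a|s)] - V'(s)` is the bracket on the
right-hand side and `P` is the transition matrix of the chain induced by `π`. Since `P` is
row-stochastic and `γ < 1`, the Neumann series `∑ (γP)ᵗ` converges and inverts `1 - γP`, so
`f = ∑ₜ γᵗ Pᵗ Δ`, which is `1 / (1 - γ)` times the average of `Δ` under `ρ_s^π`.
-/

open Finset

namespace Matrix

theorem tsum_apply {m n R X : Type*} [AddCommMonoid R] [TopologicalSpace R] [T2Space R]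
    {f : X → Matrix m n R} (hf : Summable f) (i : m) (j : n) :
    (∑' x, f x) i j = ∑' x, f x i j := by
  have hrow : (∑' x, f x) i = ∑' x, f x i := _root_.tsum_apply hf
  rw [hrow, _root_.tsum_apply (Pi.summable.1 hf i)]

variable {n : Type*} [Fintype n] [DecidableEq n]

theorem eq_tsum_pow_mulVec_of_eq_add_mulVec {R : Type*} [Ring R] [TopologicalSpace R]
    [IsTopologicalRing R] [T2Space R] {M : Matrix n n R} (hM : Summable fun t : ℕ => M ^ t)
    {x b : n → R} (hx : x = b + M *ᵥ x) : x = (∑' t : ℕ, M ^ t) *ᵥ b := by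
  have hb : (1 - M) *ᵥ x = b := by
    rw [sub_mulVec, one_mulVec]
    exact sub_eq_of_eq_add hx
  rw [← hb, mulVec_mulVec, hM.tsum_pow_mul_one_sub, one_mulVec]

theorem summable_smul_pow_of_mem_rowStochastic {P : Matrix n n ℝ} (hP : P ∈ rowStochastic ℝ n)
    {γ : ℝ} (hγ0 : 0 ≤ γ) (hγ1 : γ < 1) : Summable fun t : ℕ => (γ • P) ^ t := by
  refine Pi.summable.2 fun i => Pi.summable.2 fun j => ?_
  simp only [smul_pow, smul_apply, smul_eq_mul]
  exact (summable_geometric_of_lt_one hγ0 hγ1).of_nonneg_of_le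
    (fun t => mul_nonneg (pow_nonneg hγ0 t) (nonneg_of_mem_rowStochastic (pow_mem hP t)))
    (fun t => mul_le_of_le_one_right (pow_nonneg hγ0 t)
      (le_one_of_mem_rowStochastic (pow_mem hP t)))

theorem eq_sum_tsum_discounted_of_eq_add {P : Matrix n n ℝ} (hP : P ∈ rowStochastic ℝ n)
    {γ : ℝ} (hγ0 : 0 ≤ γ) (hγ1 : γ < 1) {x b : n → ℝ}
    (hx : ∀ i, x i = b i + γ * ∑ j, P i j * x j) (i : n) :
    x i = ∑ j, (∑' t : ℕ, γ ^ t * (P ^ t) i j) * b j := by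
  have hM := summable_smul_pow_of_mem_rowStochastic hP hγ0 hγ1
  have hx' : x = b + (γ • P) *ᵥ x := funext fun i => by
    simp [hx i, mulVec, dotProduct, mul_sum, mul_assoc]
  rw [congrFun (eq_tsum_pow_mulVec_of_eq_add_mulVec hM hx') i, mulVec, dotProduct]
  refine sum_congr rfl fun j _ => ?_
  rw [Matrix.tsum_apply hM]
  simp only [smul_pow, smul_apply, smul_eq_mul]

theorem mem_rowStochastic_of_apply_eq_sum_mul {S A : Type*} [Fintype S] [Fintype A]
    [DecidableEq S] {p : S → A → S → ℝ} {π : S → A → ℝ}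
    (hp_nonneg : ∀ s a s', 0 ≤ p s a s') (hp_sum : ∀ s a, ∑ s', p s a s' = 1)
    (hπ_nonneg : ∀ s a, 0 ≤ π s a) (hπ_sum : ∀ s, ∑ a, π s a = 1)
    {P : Matrix S S ℝ} (hP : ∀ s s', P s s' = ∑ a, π s a * p s a s') :
    P ∈ rowStochastic ℝ S := by
  refine mem_rowStochastic_iff_sum.2 ⟨fun s s' => ?_, fun s => ?_⟩
  · rw [hP]
    exact sum_nonneg fun a _ => mul_nonneg (hπ_nonneg s a) (hp_nonneg s a s')
  · simp only [hP]
    rw [sum_comm]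
    simp only [← mul_sum, hp_sum, mul_one, hπ_sum]

end Matrix

theorem soft_value_sub_eq_add_discounted {S A : Type*} [Fintype S] [Fintype A]
    {p : S → A → S → ℝ} {r : S → A → ℝ} {γ α : ℝ} {π : S → A → ℝ} {Q Q' : S → A → ℝ} {V V' : S → ℝ}
    (hQ : ∀ s a, Q s a = r s a + γ * ∑ s', p s a s' * V s')
    (hV : ∀ s, V s = ∑ a, π s a * (Q s a - α * Real.log (π s a)))
    (hQ' : ∀ s a, Q' s a = r s a + γ * ∑ s', p s a s' * V' s')
    {P : Matrix S S ℝ} (hP : ∀ s s', P s s' = ∑ a, π s a * p s a s') (s : S) :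
    V s - V' s = ((∑ a, π s a * (Q' s a - α * Real.log (π s a))) - V' s)
      + γ * ∑ s', P s s' * (V s' - V' s') := by
  have hQ_sub : ∀ a, Q s a = Q' s a + γ * ∑ s', p s a s' * (V s' - V' s') := fun a => by
    rw [hQ, hQ']
    simp only [mul_sub, sum_sub_distrib]
    ring
  have hP_mulVec : ∑ s', P s s' * (V s' - V' s')
      = ∑ a, π s a * ∑ s', p s a s' * (V s' - V' s') := by
    simp only [hP, sum_mul, mul_sum, mul_assoc]
    exact sum_comm
  rw [hP_mulVec, hV s, mul_sum, sub_add_eq_add_sub, ← sum_add_distrib]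
  congr 1
  exact sum_congr rfl fun a _ => by rw [hQ_sub]; ring

theorem soft_performance_difference_lemma_general
    {S A : Type*} [Fintype S] [Fintype A] [DecidableEq S]
    (p : S → A → S → ℝ) (r : S → A → ℝ) (γ α : ℝ)
    (hγ : 0 ≤ γ) (hγ1 : γ < 1)
    (hp_nonneg : ∀ s a s', 0 ≤ p s a s')
    (hp_sum : ∀ s a, ∑ s', p s a s' = 1)
    (π π' : S → A → ℝ)
    (hπ_nonneg : ∀ s a, 0 ≤ π s a) (hπ_sum : ∀ s, ∑ a, π s a = 1)
    (Q Q' : S → A → ℝ) (V V' : S → ℝ)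
    (hQ : ∀ s a, Q s a = r s a + γ * ∑ s', p s a s' * V s')
    (hV : ∀ s, V s = ∑ a, π s a * (Q s a - α * Real.log (π s a)))
    (hQ' : ∀ s a, Q' s a = r s a + γ * ∑ s', p s a s' * V' s')
    (hV' : ∀ s, V' s = ∑ a, π' s a * (Q' s a - α * Real.log (π' s a)))
    -- state-transition matrix of the Markov chain induced by π
    (P : Matrix S S ℝ) (hP : ∀ s s', P s s' = ∑ a, π s a * p s a s')
    -- normalized discounted state occupancy
    (ρ : S → S → ℝ)
    (hρ : ∀ s s', ρ s s' = (1 - γ) * ∑' t : ℕ, γ ^ t * (P ^ t) s s') :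
    ∀ s : S, V s - V' s =
      (1 / (1 - γ)) * ∑ s', ρ s s' *
        ((∑ a, π s' a * (Q' s' a - α * Real.log (π s' a))) -
          (∑ a, π' s' a * (Q' s' a - α * Real.log (π' s' a)))) := by
  intro s
  have hP_stoch := Matrix.mem_rowStochastic_of_apply_eq_sum_mul hp_nonneg hp_sum hπ_nonneg hπ_sum hP
  refine (Matrix.eq_sum_tsum_discounted_of_eq_add hP_stoch hγ hγ1
    (soft_value_sub_eq_add_discounted hQ hV hQ' hP) s).trans ?_
  rw [mul_sum]
  refine sum_congr rfl fun s' _ => ?_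
  have hγ_ne : 1 - γ ≠ 0 := by linarith
  rw [hρ, ← hV' s']
  field_simp

/-- soft performance difference lemma: the difference of soft values
decomposes through the normalized discounted state occupancy ρ_s^π. -/
theorem soft_performance_difference_lemma
    {S A : Type*} [Fintype S] [Fintype A] [DecidableEq S]
    (p : S → A → S → ℝ) (r : S → A → ℝ) (γ α : ℝ)
    (hγ : 0 ≤ γ) (hγ1 : γ < 1) (hα : 0 ≤ α)
    (hp_nonneg : ∀ s a s', 0 ≤ p s a s')
    (hp_sum : ∀ s a, ∑ s', p s a s' = 1)
    (π π' : S → A → ℝ)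
    (hπ_nonneg : ∀ s a, 0 ≤ π s a) (hπ_sum : ∀ s, ∑ a, π s a = 1)
    (hπ'_nonneg : ∀ s a, 0 ≤ π' s a) (hπ'_sum : ∀ s, ∑ a, π' s a = 1)
    (Q Q' : S → A → ℝ) (V V' : S → ℝ)
    (hQ : ∀ s a, Q s a = r s a + γ * ∑ s', p s a s' * V s')
    (hV : ∀ s, V s = ∑ a, π s a * (Q s a - α * Real.log (π s a)))
    (hQ' : ∀ s a, Q' s a = r s a + γ * ∑ s', p s a s' * V' s')
    (hV' : ∀ s, V' s = ∑ a, π' s a * (Q' s a - α * Real.log (π' s a)))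
    -- state-transition matrix of the Markov chain induced by π
    (P : Matrix S S ℝ) (hP : ∀ s s', P s s' = ∑ a, π s a * p s a s')
    -- normalized discounted state occupancy
    (ρ : S → S → ℝ)
    (hρ : ∀ s s', ρ s s' = (1 - γ) * ∑' t : ℕ, γ ^ t * (P ^ t) s s') :
    ∀ s : S, V s - V' s =
      (1 / (1 - γ)) * ∑ s', ρ s s' *
        ((∑ a, π s' a * (Q' s' a - α * Real.log (π s' a))) -
          (∑ a, π' s' a * (Q' s' a - α * Real.log (π' s' a)))) :=
  soft_performance_difference_lemma_general p r γ α hγ hγ1 hp_nonneg hp_sum π π' hπ_nonneg hπ_sum Q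
    Q' V V' hQ hV hQ' hV' P hP ρ hρ
end

section
/- If a policy π satisfies Adv_{π_tar}(s, π) ≥ 0 at every state s (nonnegative soft expected advantage over π_tar everywhere), then V_π(s) ≥ V_{π_tar}(s) for all s (soft policy improvement). -/
/-! Let `D = V_π - V_tar`. Subtracting the nonnegative advantage from the soft Bellman equation
of `π` cancels the rewards and entropy terms and leaves `D s ≥ γ · E_{a∼π, s'∼p}[D s']`.
At a state where `D` is minimal this gives `D_min ≥ γ · D_min`, so `D_min ≥ 0` since `γ < 1`. -/

open Finset

theorem le_sum_mul_of_forall_le {ι : Type*} [Fintype ι] {w f : ι → ℝ} {m : ℝ}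
    (hw : ∀ i, 0 ≤ w i) (hw1 : ∑ i, w i = 1) (hf : ∀ i, m ≤ f i) :
    m ≤ ∑ i, w i * f i :=
  calc m = ∑ i, w i * m := by rw [← sum_mul, hw1, one_mul]
    _ ≤ ∑ i, w i * f i := sum_le_sum fun i _ => mul_le_mul_of_nonneg_left (hf i) (hw i)

theorem nonneg_of_discounted_step_le {S : Type*} [Fintype S] {P : S → S → ℝ} {γ : ℝ}
    (hP : ∀ s s', 0 ≤ P s s') (hP1 : ∀ s, ∑ s', P s s' = 1) (hγ : 0 ≤ γ) (hγ1 : γ < 1)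
    {D : S → ℝ} (hD : ∀ s, γ * ∑ s', P s s' * D s' ≤ D s) (s : S) : 0 ≤ D s := by
  have : Nonempty S := ⟨s⟩
  obtain ⟨s₀, hs₀⟩ := Finite.exists_min D
  have hstep : γ * D s₀ ≤ D s₀ :=
    (mul_le_mul_of_nonneg_left (le_sum_mul_of_forall_le (hP s₀) (hP1 s₀) hs₀) hγ).trans (hD s₀)
  have hmin : 0 ≤ D s₀ := by nlinarith
  exact hmin.trans (hs₀ s)

section Policy

variable {S A : Type*} [Fintype A]

def policyTransition (π : S → A → ℝ) (p : S → A → S → ℝ) (s s' : S) : ℝ :=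
  ∑ a, π s a * p s a s'

theorem sum_policyTransition_mul [Fintype S] (π : S → A → ℝ) (p : S → A → S → ℝ) (f : S → ℝ)
    (s : S) :
    ∑ s', policyTransition π p s s' * f s' = ∑ a, π s a * ∑ s', p s a s' * f s' := by
  simp only [policyTransition, sum_mul, mul_sum, mul_assoc]
  exact sum_comm

theorem policyTransition_nonneg {π : S → A → ℝ} {p : S → A → S → ℝ}
    (hπ : ∀ s a, 0 ≤ π s a) (hp : ∀ s a s', 0 ≤ p s a s') (s s' : S) :
    0 ≤ policyTransition π p s s' :=
  sum_nonneg fun a _ => mul_nonneg (hπ s a) (hp s a s')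

theorem sum_policyTransition [Fintype S] {π : S → A → ℝ} {p : S → A → S → ℝ}
    (hπ1 : ∀ s, ∑ a, π s a = 1) (hp1 : ∀ s a, ∑ s', p s a s' = 1) (s : S) :
    ∑ s', policyTransition π p s s' = 1 := by
  simpa [hp1, hπ1] using sum_policyTransition_mul π p (fun _ => 1) s

theorem soft_value_sub_soft_return [Fintype S] {p : S → A → S → ℝ} {r : S → A → ℝ} {γ α : ℝ}
    {π : S → A → ℝ} {Qtar : S → A → ℝ} {Vtar Vπ : S → ℝ}
    (hQtar : ∀ s a, Qtar s a = r s a + γ * ∑ s', p s a s' * Vtar s')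
    (hVπ : ∀ s, Vπ s =
      ∑ a, π s a * (r s a - α * Real.log (π s a) + γ * ∑ s', p s a s' * Vπ s')) (s : S) :
    Vπ s - ∑ a, π s a * (Qtar s a - α * Real.log (π s a)) =
      γ * ∑ s', policyTransition π p s s' * (Vπ s' - Vtar s') := by
  rw [sum_policyTransition_mul, hVπ s, mul_sum, ← sum_sub_distrib]
  refine sum_congr rfl fun a _ => ?_
  simp only [hQtar, mul_sub, sum_sub_distrib]
  ring

end Policy

theorem soft_policy_improvement_general
    {S A : Type*} [Fintype S] [Fintype A]
    (p : S → A → S → ℝ) (r : S → A → ℝ) (γ α : ℝ)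
    (hγ : 0 ≤ γ) (hγ1 : γ < 1)
    (hp_nonneg : ∀ s a s', 0 ≤ p s a s')
    (hp_sum : ∀ s a, ∑ s', p s a s' = 1)
    (π : S → A → ℝ)
    (hπ_nonneg : ∀ s a, 0 ≤ π s a) (hπ_sum : ∀ s, ∑ a, π s a = 1)
    (Qtar : S → A → ℝ) (Vtar Vπ : S → ℝ)
    -- soft Bellman equations for π_tar
    (hQtar : ∀ s a, Qtar s a = r s a + γ * ∑ s', p s a s' * Vtar s')
    -- soft Bellman equation for π
    (hVπ : ∀ s, Vπ s =
      ∑ a, π s a * (r s a - α * Real.log (π s a) + γ * ∑ s', p s a s' * Vπ s'))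
    -- nonnegative soft expected advantage of π over π_tar everywhere
    (hAdv : ∀ s, 0 ≤ (∑ a, π s a * (Qtar s a - α * Real.log (π s a))) - Vtar s) :
    ∀ s : S, Vπ s ≥ Vtar s := by
  have hstep : ∀ s, γ * ∑ s', policyTransition π p s s' * (Vπ s' - Vtar s') ≤ Vπ s - Vtar s :=
    fun s => by
      rw [← soft_value_sub_soft_return hQtar hVπ s]
      linarith [hAdv s]
  exact fun s => sub_nonneg.mp <| nonneg_of_discounted_step_le
    (policyTransition_nonneg hπ_nonneg hp_nonneg) (sum_policyTransition hπ_sum hp_sum)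
    hγ hγ1 hstep s

/-- soft policy improvement: if a policy π has nonnegative soft
expected advantage over π_tar at every state, then V_π ≥ V_{π_tar} everywhere. -/
theorem soft_policy_improvement
    {S A : Type*} [Fintype S] [Fintype A]
    (p : S → A → S → ℝ) (r : S → A → ℝ) (γ α : ℝ)
    (hγ : 0 ≤ γ) (hγ1 : γ < 1) (hα : 0 ≤ α)
    (hp_nonneg : ∀ s a s', 0 ≤ p s a s')
    (hp_sum : ∀ s a, ∑ s', p s a s' = 1)
    (πtar π : S → A → ℝ)
    (hπtar_nonneg : ∀ s a, 0 ≤ πtar s a) (hπtar_sum : ∀ s, ∑ a, πtar s a = 1)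
    (hπ_nonneg : ∀ s a, 0 ≤ π s a) (hπ_sum : ∀ s, ∑ a, π s a = 1)
    (Qtar : S → A → ℝ) (Vtar Vπ : S → ℝ)
    -- soft Bellman equations for π_tar
    (hQtar : ∀ s a, Qtar s a = r s a + γ * ∑ s', p s a s' * Vtar s')
    (hVtar : ∀ s, Vtar s = ∑ a, πtar s a * (Qtar s a - α * Real.log (πtar s a)))
    -- soft Bellman equation for π
    (hVπ : ∀ s, Vπ s =
      ∑ a, π s a * (r s a - α * Real.log (π s a) + γ * ∑ s', p s a s' * Vπ s'))
    -- nonnegative soft expected advantage of π over π_tar everywhere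
    (hAdv : ∀ s, 0 ≤ (∑ a, π s a * (Qtar s a - α * Real.log (π s a))) - Vtar s) :
    ∀ s : S, Vπ s ≥ Vtar s :=
  soft_policy_improvement_general p r γ α hγ hγ1 hp_nonneg hp_sum π hπ_nonneg hπ_sum Qtar Vtar Vπ
    hQtar hVπ hAdv
end
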